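/- Formal δ-function identity: x_1^{-1} δ((z-y_1)/(-x_1)) · x_2^{-1} δ((z-y_2)/(-x_2)) · y_2^{-1} δ((y_1-x_0)/y_2) = x_2^{-1} δ((x_1-x_0)/x_2) · x_2^{-1} δ((z-y_2)/(-x_2)) · y_1^{-1} δ((y_2+x_0)/y_1), as formal series in x_0, x_1, x_2, y_1, y_2, z. -/

import Mathlib

/-- Generalized binomial coefficient `C(a, k) = a(a-1)⋯(a-k+1)/k!` for `a ∈ ℤ`. -/
noncomputable def gchoose (a : ℤ) (k : ℕ) : ℚ :=
  (∏ i ∈ Finset.range k, ((a : ℚ) - i)) / k.factorial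

/-- Coefficient of `u^p v^q` in `(u + s·v)^n` (`n ∈ ℤ`), expanded in nonnegative
powers of `v`. -/
noncomputable def expCoeff (n p q : ℤ) (s : ℚ) : ℚ :=
  if 0 ≤ q ∧ p = n - q then gchoose n q.toNat * s ^ q.toNat else 0

/-! Comparing coefficients of `x₀^{e₀} ⋯ z^g`, the exponents in each factor are fixed by one free
index, so each side is a finite sum, nonzero only when `m = e₀ ≥ 0` and
`n = -e₁ - e₂ - g - 2 = f₁ + f₂ + e₀ + 1 ≥ 0`. With `a = -e₁ - 1`, `b = -e₂ - 1`, `w = -f₁ - 1`,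
upper negation turns the two sides, up to the common sign `(-1)^(a + b + n)`, into
`∑_β C(a, β) C(b, n - β) C(w + β, m)` and `∑_c C(a, c) C(a + b - c, n - c) C(w, m - c)`.
These agree: expand `C(w + β, m)` by Vandermonde, apply `C(a, β) C(β, i) = C(a, i) C(a - i, β - i)`,
exchange the order of summation and sum the inner Vandermonde convolution. -/

open Finset

theorem finsum_finsum_eq_single {α β M : Type*} [AddCommMonoid M] (f : α → β → M) (a : α) (b : β)
    (h : ∀ x y, f x y ≠ 0 → x = a ∧ y = b) : ∑ᶠ x, ∑ᶠ y, f x y = f a b := by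
  rw [finsum_eq_single _ a fun x hx => finsum_eq_zero_of_forall_eq_zero fun y => by
      by_contra hxy; exact hx (h x y hxy).1,
    finsum_eq_single _ b fun y hy => by by_contra hxy; exact hy (h a y hxy).2]

theorem finsum_eq_sum_range_sub {M : Type*} [AddCommMonoid M] (f : ℤ → M) (B : ℤ) (n : ℕ)
    (h : ∀ γ, f γ ≠ 0 → B - n ≤ γ ∧ γ ≤ B) : ∑ᶠ γ, f γ = ∑ β ∈ range (n + 1), f (B - β) := by
  rw [finsum_eq_sum_of_support_subset f (s := (range (n + 1)).image fun β : ℕ => B - β),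
    sum_image fun x _ y _ hxy => by simpa using hxy]
  intro γ hγ
  have := h γ hγ
  simp only [coe_image, coe_range, Set.mem_image, Set.mem_Iio]
  exact ⟨(B - γ).toNat, by omega, by omega⟩

theorem finsum_finsum_finsum_eq_sum_range {M : Type*} [AddCommMonoid M] (F : ℤ → ℤ → ℤ → M)
    (u v : ℤ → ℤ) (B : ℤ) (n : ℕ)
    (h : ∀ γ x y, F γ x y ≠ 0 → x = u γ ∧ y = v γ ∧ B - n ≤ γ ∧ γ ≤ B) :
    ∑ᶠ γ, ∑ᶠ x, ∑ᶠ y, F γ x y = ∑ β ∈ range (n + 1), F (B - β) (u (B - β)) (v (B - β)) := by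
  rw [finsum_congr fun γ => finsum_finsum_eq_single (F γ) (u γ) (v γ) fun x y hxy =>
    ⟨(h γ x y hxy).1, (h γ x y hxy).2.1⟩]
  exact finsum_eq_sum_range_sub _ B n fun γ hγ => (h γ _ _ hγ).2.2

section
variable {R : Type*} [CommRing R] [BinomialRing R]

theorem Ring.choose_mul_neg_one_pow (r : R) (k : ℕ) :
    Ring.choose r k * (-1) ^ k = Ring.choose ((k : R) - 1 - r) k := by
  have := Ring.choose_neg (r - k + 1) k
  rw [show -(r - k + 1) = (k : R) - 1 - r by abel, show r - k + 1 + k - 1 = r by abel] at this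
  rw [this, Int.negOnePow_def, Units.smul_def]
  simp [mul_comm]

theorem sum_range_choose_mul_choose (r s : R) (n : ℕ) :
    ∑ k ∈ range (n + 1), Ring.choose r k * Ring.choose s (n - k) = Ring.choose (r + s) n := by
  rw [Ring.add_choose_eq n (Commute.all r s), Nat.sum_antidiagonal_eq_sum_range_succ_mk]

theorem sum_choose_mul_choose_mul_sum_choose (a b : R) (n : ℕ) (g : ℕ → R) :
    ∑ β ∈ range (n + 1), Ring.choose a β * Ring.choose b (n - β) *
        ∑ i ∈ range (β + 1), (β.choose i : R) * g i =
      ∑ c ∈ range (n + 1), Ring.choose a c * Ring.choose (a + b - c) (n - c) * g c := by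
  calc _ = ∑ β ∈ range (n + 1), ∑ i ∈ range (β + 1),
          Ring.choose a i * Ring.choose (a - i) (β - i) * Ring.choose b (n - i - (β - i)) *
            g i := by
        refine sum_congr rfl fun β _ => ?_
        rw [mul_sum]
        refine sum_congr rfl fun i hi => ?_
        have hiβ : i ≤ β := Nat.lt_succ_iff.mp (mem_range.mp hi)
        rw [← Ring.choose_smul_choose a hiβ, nsmul_eq_mul, show n - i - (β - i) = n - β by omega]
        ring
    _ = ∑ i ∈ range (n + 1), ∑ k ∈ range (n + 1 - i),
          Ring.choose a i * Ring.choose (a - i) k * Ring.choose b (n - i - k) * g i :=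
        sum_range_diag_flip (n + 1) fun i k =>
          Ring.choose a i * Ring.choose (a - i) k * Ring.choose b (n - i - k) * g i
    _ = _ := by
        refine sum_congr rfl fun i hi => ?_
        rw [show n + 1 - i = n - i + 1 by have := mem_range.mp hi; omega,
          show a + b - i = (a - i) + b by ring, ← sum_range_choose_mul_choose, mul_sum, sum_mul]
        refine sum_congr rfl fun k _ => ?_
        ring

theorem choose_add_natCast_eq_sum (w : R) (β m : ℕ) :
    Ring.choose (w + β) m =
      ∑ i ∈ range (β + 1), (β.choose i : R) * if i ≤ m then Ring.choose w (m - i) else 0 := by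
  calc Ring.choose (w + β) m
      = ∑ i ∈ range (m + 1), (β.choose i : R) * Ring.choose w (m - i) := by
        simp only [add_comm w, ← sum_range_choose_mul_choose, Ring.choose_natCast]
    _ = ∑ i ∈ range (m + 1) with i ≤ β, (β.choose i : R) * Ring.choose w (m - i) := by
        refine (sum_filter_of_ne fun i _ h => ?_).symm
        by_contra hi
        simp [Nat.choose_eq_zero_of_lt (not_le.mp hi)] at h
    _ = ∑ i ∈ range (β + 1) with i ≤ m, (β.choose i : R) * Ring.choose w (m - i) := by
        congr 1
        ext i
        simp only [mem_filter, mem_range]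
        omega
    _ = _ := by
        rw [sum_filter]
        simp only [mul_ite, mul_zero]

theorem sum_choose_mul_choose_mul_choose_add (a b w : R) (n m : ℕ) :
    ∑ β ∈ range (n + 1), Ring.choose a β * Ring.choose b (n - β) * Ring.choose (w + β) m =
      ∑ c ∈ range (n + 1), Ring.choose a c * Ring.choose (a + b - c) (n - c) *
        if c ≤ m then Ring.choose w (m - c) else 0 := by
  simp only [choose_add_natCast_eq_sum]
  exact sum_choose_mul_choose_mul_sum_choose a b n _

end

theorem gchoose_eq_choose (a : ℤ) (k : ℕ) : gchoose a k = Ring.choose (a : ℚ) k := by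
  rw [Ring.choose_eq_smul, ← Polynomial.aeval_eq_smeval, Polynomial.aeval_def,
    ← Polynomial.eval_map, descPochhammer_map, descPochhammer_eval_eq_prod_range, gchoose,
    smul_eq_mul, div_eq_inv_mul]

theorem expCoeff_natCast {n p : ℤ} {q : ℕ} (s : ℚ) (h : p = n - q) :
    expCoeff n p q s = Ring.choose (n : ℚ) q * s ^ q := by
  rw [expCoeff, if_pos ⟨q.cast_nonneg, h⟩, Int.toNat_natCast, gchoose_eq_choose]

theorem nonneg_and_eq_sub_of_expCoeff_ne_zero {n p q : ℤ} {s : ℚ} (h : expCoeff n p q s ≠ 0) :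
    0 ≤ q ∧ p = n - q := by
  by_contra hq
  exact h (if_neg hq)

theorem expCoeff_of_neg {n p q : ℤ} (s : ℚ) (h : q < 0) : expCoeff n p q s = 0 :=
  if_neg fun hq => by omega

section
variable (e0 e1 e2 f1 f2 g : ℤ)

noncomputable def lhsTerm (γ1 β1 β2 : ℤ) : ℚ :=
  ((-1 : ℚ) ^ (-e1 - 1)) * expCoeff (-e1 - 1) γ1 β1 (-1) *
    (((-1 : ℚ) ^ (-e2 - 1)) * expCoeff (-e2 - 1) (g - γ1) β2 (-1)) *
    expCoeff (-(f2 - β2) - 1) (f1 - β1) e0 (-1)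

noncomputable def rhsTerm (a c b : ℤ) : ℚ :=
  expCoeff (-a - 1) e1 c (-1) *
    (((-1 : ℚ) ^ (-(e2 - a) - 1)) * expCoeff (-(e2 - a) - 1) g b (-1)) *
    expCoeff (-f1 - 1) (f2 - b) (e0 - c) 1

variable {e0 e1 e2 f1 f2 g}

theorem indices_of_lhsTerm_ne_zero {γ1 β1 β2 : ℤ} (h : lhsTerm e0 e1 e2 f1 f2 g γ1 β1 β2 ≠ 0) :
    β1 = -e1 - 1 - γ1 ∧ β2 = γ1 - g - e2 - 1 ∧ 0 ≤ e0 ∧ f1 + f2 + e0 + 1 = -e1 - e2 - g - 2 ∧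
      g + e2 + 1 ≤ γ1 ∧ γ1 ≤ -e1 - 1 := by
  simp only [lhsTerm, ne_eq, mul_eq_zero, not_or] at h
  have h1 := nonneg_and_eq_sub_of_expCoeff_ne_zero h.1.1.2
  have h2 := nonneg_and_eq_sub_of_expCoeff_ne_zero h.1.2.2
  have h3 := nonneg_and_eq_sub_of_expCoeff_ne_zero h.2
  omega

theorem indices_of_rhsTerm_ne_zero {a c b : ℤ} (h : rhsTerm e0 e1 e2 f1 f2 g a c b ≠ 0) :
    c = -a - 1 - e1 ∧ b = a - e2 - 1 - g ∧ 0 ≤ e0 ∧ f1 + f2 + e0 + 1 = -e1 - e2 - g - 2 ∧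
      g + e2 + 1 ≤ a ∧ a ≤ -e1 - 1 := by
  simp only [rhsTerm, ne_eq, mul_eq_zero, not_or] at h
  have h1 := nonneg_and_eq_sub_of_expCoeff_ne_zero h.1.1
  have h2 := nonneg_and_eq_sub_of_expCoeff_ne_zero h.1.2.2
  have h3 := nonneg_and_eq_sub_of_expCoeff_ne_zero h.2
  omega

theorem lhsTerm_eq {m n β : ℕ} (hn : -e1 - e2 - g - 2 = n) (hm : f1 + f2 + m + 1 = n) (hβ : β ≤ n)
    {γ1 β1 β2 : ℤ} (hγ1 : γ1 = -e1 - 1 - β) (hβ1 : β1 = β) (hβ2 : β2 = (n - β : ℕ)) :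
    lhsTerm m e1 e2 f1 f2 g γ1 β1 β2 =
      (-1 : ℚ) ^ (-e1 - 1) * (-1) ^ (-e2 - 1) * (-1) ^ n *
        (Ring.choose ((-e1 - 1 : ℤ) : ℚ) β * Ring.choose ((-e2 - 1 : ℤ) : ℚ) (n - β) *
          Ring.choose ((-f1 - 1 : ℤ) + β : ℚ) m) := by
  subst hγ1 hβ1 hβ2
  have hf2 : (f2 : ℚ) = n - f1 - m - 1 := by exact_mod_cast (by omega : f2 = n - f1 - m - 1)
  have hw : ((-f1 - 1 : ℤ) + β : ℚ) = (m : ℚ) - 1 - ((-(f2 - (n - β : ℕ)) - 1 : ℤ) : ℚ) := by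
    push_cast [Nat.cast_sub hβ, hf2]
    ring
  rw [lhsTerm, expCoeff_natCast _ (by omega), expCoeff_natCast _ (by omega),
    expCoeff_natCast _ (by omega), hw, ← Ring.choose_mul_neg_one_pow,
    show (-1 : ℚ) ^ n = (-1) ^ β * (-1) ^ (n - β) by rw [← pow_add, Nat.add_sub_cancel' hβ]]
  ring

theorem rhsTerm_eq {m n c : ℕ} (hn : -e1 - e2 - g - 2 = n) (hm : f1 + f2 + m + 1 = n) (hc : c ≤ n)
    {a c' b : ℤ} (ha : a = -e1 - 1 - c) (hc' : c' = c) (hb : b = (n - c : ℕ)) :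
    rhsTerm m e1 e2 f1 f2 g a c' b =
      (-1 : ℚ) ^ (-e1 - 1) * (-1) ^ (-e2 - 1) * (-1) ^ n *
        (Ring.choose ((-e1 - 1 : ℤ) : ℚ) c *
          Ring.choose (((-e1 - 1 : ℤ) : ℚ) + ((-e2 - 1 : ℤ) : ℚ) - c) (n - c) *
          if c ≤ m then Ring.choose ((-f1 - 1 : ℤ) : ℚ) (m - c) else 0) := by
  subst ha hc' hb
  have hsign : (-1 : ℚ) ^ (-(e2 - (-e1 - 1 - c)) - 1) * (-1) ^ (n - c) =
      (-1 : ℚ) ^ (-e1 - 1) * (-1) ^ (-e2 - 1) * (-1) ^ n := by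
    rw [← zpow_natCast, ← zpow_natCast, ← zpow_add₀ (by norm_num),
      show -(e2 - (-e1 - 1 - c)) - 1 + ((n - c : ℕ) : ℤ) = -e1 - 1 + (-e2 - 1) + n + 2 * -(c : ℤ)
        by omega, zpow_add₀ (by norm_num), (even_two_mul _).neg_one_zpow, mul_one,
      zpow_add₀ (by norm_num), zpow_add₀ (by norm_num)]
  rw [rhsTerm, expCoeff_natCast _ (by omega), expCoeff_natCast _ (by omega),
    show ((-(-e1 - 1 - c) - 1 : ℤ) : ℚ) = (c : ℚ) - 1 - ((-e1 - 1 : ℤ) : ℚ) by push_cast; ring,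
    Ring.choose_mul_neg_one_pow, sub_sub_cancel,
    show ((-(e2 - (-e1 - 1 - c)) - 1 : ℤ) : ℚ) = ((-e1 - 1 : ℤ) : ℚ) + ((-e2 - 1 : ℤ) : ℚ) - c by
      push_cast; ring]
  split_ifs with hcm
  · rw [show (m : ℤ) - c = ((m - c : ℕ) : ℤ) by omega, expCoeff_natCast _ (by omega), one_pow,
      ← hsign]
    ring
  · rw [expCoeff_of_neg _ (by omega)]
    ring
end

/-- Formal δ-function identity
`x₁⁻¹ δ((z-y₁)/(-x₁)) · x₂⁻¹ δ((z-y₂)/(-x₂)) · y₂⁻¹ δ((y₁-x₀)/y₂)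
 = x₂⁻¹ δ((x₁-x₀)/x₂) · x₂⁻¹ δ((z-y₂)/(-x₂)) · y₁⁻¹ δ((y₂+x₀)/y₁)`,
with `δ(x) = ∑_{n∈ℤ} xⁿ`, binomials expanded in nonnegative powers of the
second-listed variable, and `(-x)ⁿ = (-1)ⁿ xⁿ`.  Stated coefficientwise for the
monomial `x₀^{e₀} x₁^{e₁} x₂^{e₂} y₁^{f₁} y₂^{f₂} z^{g}`. -/
theorem delta_three_factor_identity_II :
    ∀ e0 e1 e2 f1 f2 g : ℤ,
      (∑ᶠ (γ1 : ℤ) (β1 : ℤ) (β2 : ℤ),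
        ((-1 : ℚ) ^ (-e1 - 1)) * expCoeff (-e1 - 1) γ1 β1 (-1) *
          (((-1 : ℚ) ^ (-e2 - 1)) * expCoeff (-e2 - 1) (g - γ1) β2 (-1)) *
          expCoeff (-(f2 - β2) - 1) (f1 - β1) e0 (-1))
      = ∑ᶠ (a : ℤ) (c : ℤ) (b : ℤ),
          expCoeff (-a - 1) e1 c (-1) *
            (((-1 : ℚ) ^ (-(e2 - a) - 1)) * expCoeff (-(e2 - a) - 1) g b (-1)) *
            expCoeff (-f1 - 1) (f2 - b) (e0 - c) 1 := by
  intro e0 e1 e2 f1 f2 g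
  change ∑ᶠ (γ1 : ℤ) (β1 : ℤ) (β2 : ℤ), lhsTerm e0 e1 e2 f1 f2 g γ1 β1 β2 =
    ∑ᶠ (a : ℤ) (c : ℤ) (b : ℤ), rhsTerm e0 e1 e2 f1 f2 g a c b
  by_cases h : 0 ≤ e0 ∧ 0 ≤ -e1 - e2 - g - 2 ∧ f1 + f2 + e0 + 1 = -e1 - e2 - g - 2
  · obtain ⟨m, rfl⟩ := Int.eq_ofNat_of_zero_le h.1
    obtain ⟨n, hn⟩ := Int.eq_ofNat_of_zero_le h.2.1
    have hm : f1 + f2 + m + 1 = n := by omega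
    rw [finsum_finsum_finsum_eq_sum_range _ (fun γ => -e1 - 1 - γ) (fun γ => γ - g - e2 - 1)
        (-e1 - 1) n fun γ x y hxy => by have := indices_of_lhsTerm_ne_zero hxy; omega,
      finsum_finsum_finsum_eq_sum_range _ (fun a => -a - 1 - e1) (fun a => a - e2 - 1 - g)
        (-e1 - 1) n fun a c b hacb => by have := indices_of_rhsTerm_ne_zero hacb; omega,
      sum_congr rfl fun β hβ => lhsTerm_eq hn hm (Nat.lt_succ_iff.mp (mem_range.mp hβ))
        (by omega) (by omega) (by have := mem_range.mp hβ; omega),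
      sum_congr rfl fun c hc => rhsTerm_eq hn hm (Nat.lt_succ_iff.mp (mem_range.mp hc))
        (by omega) (by omega) (by have := mem_range.mp hc; omega),
      ← mul_sum, ← mul_sum, sum_choose_mul_choose_mul_choose_add]
  · have hl : ∀ γ1 β1 β2, lhsTerm e0 e1 e2 f1 f2 g γ1 β1 β2 = 0 := fun _ _ _ =>
      by_contra fun hne => h (by have := indices_of_lhsTerm_ne_zero hne; omega)
    have hr : ∀ a c b, rhsTerm e0 e1 e2 f1 f2 g a c b = 0 := fun _ _ _ =>
      by_contra fun hne => h (by have := indices_of_rhsTerm_ne_zero hne; omega)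
    simp only [hl, hr, finsum_zero]
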